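/- arXiv:1910.01633 — 5 statements merged into one kernel-verified Lean document; each statement's English description precedes it below -/
import Mathlib

section
/- Let Q be a connected quiver with vertex set V and edge set E, let k be a field, and let x : E → k be a toric representation of Q. Then x is indecomposable if and only if the graph (V, {e ∈ E : x_e ≠ 0}) is connected. -/
open Classical Finset

noncomputable section

/-- The equivalence relation on vertices generated by the edges in `D`:
`t e` and `h e` are related for every `e ∈ D`. -/
def joinedRel {V E : Type} (tl hd : E → V) (D : Set E) : V → V → Prop :=
  Relation.EqvGen fun a b => ∃ e ∈ D, (tl e = a ∧ hd e = b) ∨ (tl e = b ∧ hd e = a)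

/-- The graph `(V, D)` is connected. -/
def IsConn {V E : Type} (tl hd : E → V) (D : Set E) : Prop :=
  ∀ a b : V, joinedRel tl hd D a b

/-- `T ⊆ E` is a spanning tree: `(V, T)` is connected and `#T = #V - 1`. -/
def IsSpanningTree {V E : Type} [Fintype V] (tl hd : E → V) (T : Finset E) : Prop :=
  IsConn tl hd ↑T ∧ T.card + 1 = Fintype.card V

/-- The connected component of the vertex `v` in the graph with edge set `D`. -/
def component {V E : Type} [Fintype V] (tl hd : E → V) (D : Finset E) (v : V) : Finset V :=
  Finset.univ.filter fun j => joinedRel tl hd (↑D) v j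

/-- Genericity of a stability parameter. -/
def Generic {V : Type} [Fintype V] (θ : V → ℝ) : Prop :=
  ∀ J : Finset V, J.Nonempty → J ≠ Finset.univ → ∑ i ∈ J, θ i ≠ 0

/-- Auxiliary recursion computing the external activity: `S` is the set of remaining
edges and `C` the set of already contracted edges (an edge of the current, partially
contracted, quiver is a loop iff its endpoints are joined by edges of `C`).  At each
step the largest non-loop edge is contracted (if it lies in `T`) or deleted (otherwise);
once no non-loop edge remains (i.e. the contracted quiver has one vertex), the number of
remaining (loop) edges is returned. -/
def extactAux {V E : Type} [LinearOrder E] (tl hd : E → V) (T : Finset E)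
    (S C : Finset E) : ℕ :=
  if hne : (S.filter fun e => ¬ joinedRel tl hd (↑C) (tl e) (hd e)).Nonempty then
    if (S.filter fun e => ¬ joinedRel tl hd (↑C) (tl e) (hd e)).max' hne ∈ T then
      extactAux tl hd T
        (S.erase ((S.filter fun e => ¬ joinedRel tl hd (↑C) (tl e) (hd e)).max' hne))
        (insert ((S.filter fun e => ¬ joinedRel tl hd (↑C) (tl e) (hd e)).max' hne) C)
    else
      extactAux tl hd T
        (S.erase ((S.filter fun e => ¬ joinedRel tl hd (↑C) (tl e) (hd e)).max' hne)) C
  else S.card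
termination_by S.card
decreasing_by
  · exact Finset.card_lt_card (Finset.erase_ssubset
      (Finset.mem_of_mem_filter _ (Finset.max'_mem _ hne)))
  · exact Finset.card_lt_card (Finset.erase_ssubset
      (Finset.mem_of_mem_filter _ (Finset.max'_mem _ hne)))

/-- The external activity `extact(Q, T)` of a spanning tree `T`, with respect to a fixed
linear order on the edges. -/
def extact {V E : Type} [Fintype E] [LinearOrder E] (tl hd : E → V) (T : Finset E) : ℕ :=
  extactAux tl hd T Finset.univ ∅

/-- Isomorphism of toric representations. -/
def IsoRep {V E k : Type} [Field k] (tl hd : E → V) (x x' : E → k) : Prop :=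
  ∃ g : V → kˣ, ∀ e, x' e = (g (hd e) : k) * x e * ((g (tl e) : k))⁻¹

/-- Gauge equivalence (the `(kˣ)^V`-action) for representations of the double quiver. -/
def GaugeEquiv {V E k : Type} [Field k] (tl hd : E → V) (x xs x' xs' : E → k) : Prop :=
  ∃ g : V → kˣ,
    (∀ e, x' e = (g (hd e) : k) * x e * ((g (tl e) : k))⁻¹) ∧
    (∀ e, xs' e = (g (tl e) : k) * xs e * ((g (hd e) : k))⁻¹)

/-- The moment map equations for the parameter `lam`. -/
def MomentMap {V E k : Type} [Fintype E] [Field k] (tl hd : E → V) (lam : V → k)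
    (x xs : E → k) : Prop :=
  ∀ i : V,
    (∑ e ∈ Finset.univ.filter fun e => hd e = i, x e * xs e) -
      (∑ e ∈ Finset.univ.filter fun e => tl e = i, x e * xs e) = lam i

/-- `J` is closed for `(x, xs)`, with only the conditions for edges in `S` imposed. -/
def ClosedOn {V E k : Type} [Zero k] (tl hd : E → V) (x xs : E → k) (S : Set E)
    (J : Finset V) : Prop :=
  ∀ e ∈ S, (x e ≠ 0 → tl e ∈ J → hd e ∈ J) ∧ (xs e ≠ 0 → hd e ∈ J → tl e ∈ J)

/-- `θ`-stability of `(x, xs)` on the subquiver with vertex set `W` and edge set `S`. -/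
def StableSub {V E k : Type} [Zero k] (tl hd : E → V) (θ : V → ℝ) (x xs : E → k)
    (W : Finset V) (S : Set E) : Prop :=
  ∀ J : Finset V, J ⊆ W → ClosedOn tl hd x xs S J → J.Nonempty → J ≠ W →
    0 < ∑ i ∈ J, θ i

/-- Destabilising subsets for `(x, xs)` on the subquiver `(W, S)`. -/
def DestabSub {V E k : Type} [Zero k] (tl hd : E → V) (θ : V → ℝ) (x xs : E → k)
    (W : Finset V) (S : Set E) (J : Finset V) : Prop :=
  J ⊆ W ∧ J.Nonempty ∧ J ≠ W ∧ ClosedOn tl hd x xs S J ∧ ∑ i ∈ J, θ i ≤ 0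

/-- The projection identifying the vertex `a` with the vertex `b`, i.e. the quotient map
`V → V/e` for the contraction of an edge with tail `a` and head `b` (the quotient being
modelled on the subtype of vertices different from `a`). -/
def cProj {V : Type} (a b : V) (h : b ≠ a) (i : V) : {j : V // j ≠ a} :=
  if hi : i = a then ⟨b, h⟩ else ⟨i, hi⟩

/-- Tail map of the contracted quiver `Q/e`. -/
def contractTl {V E : Type} (tl hd : E → V) (e : E) (h : hd e ≠ tl e)
    (f : {f : E // f ≠ e}) : {j : V // j ≠ tl e} := cProj (tl e) (hd e) h (tl f.1)

/-- Head map of the contracted quiver `Q/e`. -/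
def contractHd {V E : Type} (tl hd : E → V) (e : E) (h : hd e ≠ tl e)
    (f : {f : E // f ≠ e}) : {j : V // j ≠ tl e} := cProj (tl e) (hd e) h (hd f.1)

/-- Contraction `θ/e` (or `λ/e`) of a parameter along the contraction of an edge with
tail `a` and head `b`: the new vertex `ι` (represented by `b`) gets the value
`θ a + θ b`, all other vertices keep their values. -/
def contractParam {V R : Type} [Add R] (a b : V) (θ : V → R) (j : {i : V // i ≠ a}) : R :=
  if (j : V) = b then θ a + θ b else θ (j : V)

/-- The graph of the tree-assignment recursion: `TreeAssign tl hd x xs W S θ T` means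
that the recursion, applied to the restriction of `(x, xs)` to the subquiver with vertex
set `W` and edge set `S` and with stability parameter `θ` (and the linear order induced
from `E`), produces the spanning tree `T`. -/
inductive TreeAssign {V E k : Type} [Fintype V] [LinearOrder E] [Zero k]
    (tl hd : E → V) (x xs : E → k) :
    Finset V → Finset E → (V → ℝ) → Finset E → Prop
  | base (W : Finset V) (S : Finset E) (θ : V → ℝ) (hW : W.card = 1) :
      TreeAssign tl hd x xs W S θ ∅
  | delete (W : Finset V) (S : Finset E) (θ : V → ℝ) (e : E)
      (he : e ∈ S) (hloop : tl e ≠ hd e)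
      (hsmall : ∀ f ∈ S, tl f ≠ hd f → e ≤ f)
      (hstab : StableSub tl hd θ x xs W ↑(S.erase e))
      (T : Finset E) (ih : TreeAssign tl hd x xs W (S.erase e) θ T) :
      TreeAssign tl hd x xs W S θ T
  | contract (W : Finset V) (S : Finset E) (θ : V → ℝ) (e : E) (a b : V)
      (he : e ∈ S) (hloop : tl e ≠ hd e)
      (hsmall : ∀ f ∈ S, tl f ≠ hd f → e ≤ f)
      (hab : (a = tl e ∧ b = hd e) ∨ (a = hd e ∧ b = tl e))
      (J₁ : Finset V)
      (hJ₁ : DestabSub tl hd θ x xs W ↑(S.erase e) J₁)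
      (hall : ∀ J, DestabSub tl hd θ x xs W ↑(S.erase e) J → a ∈ J ∧ b ∉ J)
      (hmin : ∀ J, DestabSub tl hd θ x xs W ↑(S.erase e) J →
        ∑ i ∈ J₁, θ i ≤ ∑ i ∈ J, θ i)
      (T₁ T₂ : Finset E)
      (ih₁ : TreeAssign tl hd x xs J₁ (S.filter fun f => tl f ∈ J₁ ∧ hd f ∈ J₁)
          (fun i => if i = a then θ i - ∑ j ∈ J₁, θ j
            else if i = b then θ i + ∑ j ∈ J₁, θ j else θ i) T₁)
      (ih₂ : TreeAssign tl hd x xs (W \ J₁)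
          (S.filter fun f => tl f ∈ W \ J₁ ∧ hd f ∈ W \ J₁)
          (fun i => if i = a then θ i - ∑ j ∈ J₁, θ j
            else if i = b then θ i + ∑ j ∈ J₁, θ j else θ i) T₂) :
      TreeAssign tl hd x xs W S θ (insert e (T₁ ∪ T₂))

/-- Points of the cell `M_T`: `θ`-stable pairs satisfying the moment map equations whose
assigned spanning tree is `T`. -/
def CellPt {V E k : Type} [Fintype V] [Fintype E] [LinearOrder E] [Field k]
    (tl hd : E → V) (lam : V → k) (θ : V → ℝ) (T : Finset E) : Type :=
  {p : (E → k) × (E → k) //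
    StableSub tl hd θ p.1 p.2 Finset.univ Set.univ ∧
    MomentMap tl hd lam p.1 p.2 ∧
    TreeAssign tl hd p.1 p.2 Finset.univ Finset.univ θ T}

/-- The cell `M_T` of the Nakajima orbit set: `(kˣ)^V`-orbits of points. -/
def Cell {V E k : Type} [Fintype V] [Fintype E] [LinearOrder E] [Field k]
    (tl hd : E → V) (lam : V → k) (θ : V → ℝ) (T : Finset E) : Type :=
  Quot fun p q : CellPt tl hd lam θ T => GaugeEquiv tl hd p.1.1 p.1.2 q.1.1 q.1.2

/-!
A subspace of the line `k` is `0` or `k`, so a decomposition `(U, W)` of a toric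
representation amounts to a nonempty proper set of vertices `{i | U i = k}` which no edge
with `x e ≠ 0` enters or leaves. The graph of nonzero edges is connected exactly when no
such set exists, since the vertices joined to a given vertex form one whenever it is not.
-/

section Connectivity

variable {V E : Type} (tl hd : E → V)

theorem joinedRel.iff_of_forall_iff {D : Set E} {P : V → Prop}
    (hP : ∀ e ∈ D, P (tl e) ↔ P (hd e)) {a b : V} (hab : joinedRel tl hd D a b) :
    P a ↔ P b := by
  induction hab with
  | rel a b h =>
    obtain ⟨e, he, ⟨rfl, rfl⟩ | ⟨rfl, rfl⟩⟩ := h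
    exacts [hP e he, (hP e he).symm]
  | refl => rfl
  | symm _ _ _ ih => exact ih.symm
  | trans _ _ _ _ _ ih₁ ih₂ => exact ih₁.trans ih₂

theorem joinedRel_tl_iff_hd {D : Set E} (a : V) {e : E} (he : e ∈ D) :
    joinedRel tl hd D a (tl e) ↔ joinedRel tl hd D a (hd e) :=
  have hedge : joinedRel tl hd D (tl e) (hd e) := .rel _ _ ⟨e, he, .inl ⟨rfl, rfl⟩⟩
  ⟨fun h => h.trans _ _ _ hedge, fun h => h.trans _ _ _ hedge.symm⟩

theorem isConn_iff_forall_iff {D : Set E} :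
    IsConn tl hd D ↔
      ∀ P : V → Prop, (∀ e ∈ D, P (tl e) ↔ P (hd e)) → ∀ a, P a → ∀ b, P b :=
  ⟨fun hD _ hP a ha b => ((hD a b).iff_of_forall_iff tl hd hP).mp ha,
    fun h a b => h _ (fun _ he => joinedRel_tl_iff_hd tl hd a he) a (.refl a) b⟩

end Connectivity

-- Under `open Classical` this instance sends the search for lattice instances on
-- `Submodule k k` (that is, `Ideal k`) into a loop.
attribute [-instance] ValuationRing.instLinearOrderIdealOfDecidableLE

section SubspacesOfLine

variable {k : Type} [Field k]

theorem Submodule.eq_top_iff_ne_top_of_isCompl {U W : Submodule k k} (h : IsCompl U W) :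
    U = ⊤ ↔ W ≠ ⊤ := by
  refine ⟨fun hU hW => ?_, fun hW => ?_⟩
  · have hdisj := h.disjoint
    rw [hU, hW, disjoint_self] at hdisj
    exact top_ne_bot hdisj
  · obtain rfl := (Ideal.eq_bot_or_top W).resolve_right hW
    exact eq_top_of_isCompl_bot h

theorem Submodule.eq_top_of_mul_mem {U U' : Submodule k k} {c : k} (hc : c ≠ 0)
    (hmul : ∀ u ∈ U, c * u ∈ U') (hU : U = ⊤) : U' = ⊤ :=
  Ideal.eq_top_of_isUnit_mem U' (by simpa using hmul 1 (hU ▸ trivial))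
    (isUnit_iff_ne_zero.mpr hc)

theorem mul_mem_ite_top_bot {p q : Prop} [Decidable p] [Decidable q] {c u : k}
    (hpq : c ≠ 0 → (p ↔ q)) (hu : u ∈ (if p then ⊤ else ⊥ : Submodule k k)) :
    c * u ∈ (if q then ⊤ else ⊥ : Submodule k k) := by
  by_cases hc : c = 0
  · simp [hc]
  · rw [← if_congr (hpq hc) rfl rfl]
    split_ifs at hu ⊢
    · trivial
    · simp_all

end SubspacesOfLine

theorem exists_decomposition_iff {V E : Type} (tl hd : E → V) {k : Type} [Field k]
    (x : E → k) :
    (∃ U W : V → Submodule k k,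
        (∀ i, IsCompl (U i) (W i)) ∧
        (∀ e, ∀ u ∈ U (tl e), x e * u ∈ U (hd e)) ∧
        (∀ e, ∀ w ∈ W (tl e), x e * w ∈ W (hd e)) ∧
        (∃ i, U i ≠ ⊥) ∧ (∃ j, W j ≠ ⊥)) ↔
      ∃ P : V → Prop, (∀ e, x e ≠ 0 → (P (tl e) ↔ P (hd e))) ∧ (∃ i, P i) ∧ ∃ j, ¬ P j := by
  constructor
  · rintro ⟨U, W, hcompl, hU, hW, ⟨i, hi⟩, ⟨j, hj⟩⟩
    have hUW : ∀ i, U i = ⊤ ↔ W i ≠ ⊤ := fun i =>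
      Submodule.eq_top_iff_ne_top_of_isCompl (hcompl i)
    refine ⟨fun i => U i = ⊤, fun e hx => ⟨Submodule.eq_top_of_mul_mem hx (hU e), ?_⟩,
      ⟨i, (Ideal.eq_bot_or_top _).resolve_left hi⟩,
      ⟨j, fun hUj => (hUW j).mp hUj ((Ideal.eq_bot_or_top _).resolve_left hj)⟩⟩
    show U (hd e) = ⊤ → U (tl e) = ⊤
    rw [hUW, hUW, not_imp_not]
    exact Submodule.eq_top_of_mul_mem hx (hW e)
  · rintro ⟨P, hP, ⟨i, hi⟩, ⟨j, hj⟩⟩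
    refine ⟨fun i => if P i then ⊤ else ⊥, fun i => if ¬ P i then ⊤ else ⊥,
      fun i => ?_, fun e _ => mul_mem_ite_top_bot (hP e),
      fun e _ => mul_mem_ite_top_bot fun hx => not_congr (hP e hx),
      ⟨i, by simp [hi]⟩, ⟨j, by simp [hj]⟩⟩
    by_cases h : P i <;> simp [h, isCompl_top_bot, isCompl_bot_top]

theorem statement0_general {V E : Type}
    (tl hd : E → V)
    (k : Type) [Field k] (x : E → k) :
    (¬ ∃ U W : V → Submodule k k,
        (∀ i, IsCompl (U i) (W i)) ∧
        (∀ e, ∀ u ∈ U (tl e), x e * u ∈ U (hd e)) ∧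
        (∀ e, ∀ w ∈ W (tl e), x e * w ∈ W (hd e)) ∧
        (∃ i, U i ≠ ⊥) ∧ (∃ j, W j ≠ ⊥)) ↔
      IsConn tl hd {e | x e ≠ 0} := by
  rw [exists_decomposition_iff, isConn_iff_forall_iff]
  simp only [Set.mem_ofPred_eq, not_exists, not_and, not_not, forall_exists_index]

/-- a toric representation of a connected quiver is indecomposable iff its
inversion graph `(V, {e | x e ≠ 0})` is connected. -/
theorem statement0 {V E : Type} [Fintype V] [Nonempty V] [Fintype E]
    (tl hd : E → V) (hQ : IsConn tl hd Set.univ)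
    (k : Type) [Field k] (x : E → k) :
    (¬ ∃ U W : V → Submodule k k,
        (∀ i, IsCompl (U i) (W i)) ∧
        (∀ e, ∀ u ∈ U (tl e), x e * u ∈ U (hd e)) ∧
        (∀ e, ∀ w ∈ W (tl e), x e * w ∈ W (hd e)) ∧
        (∃ i, U i ≠ ⊥) ∧ (∃ j, W j ≠ ⊥)) ↔
      IsConn tl hd {e | x e ≠ 0} :=
  statement0_general tl hd k x

end
end

section
/- Let Q be a connected quiver with a linear order on its edge set E, and let q be a prime power. The number of isomorphism classes of indecomposable toric representations of Q over the finite field F_q equals the sum over all spanning trees T of Q of q^{extact(Q,T)}. -/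
open Classical Finset

noncomputable section

/-!
The gauge group `(kˣ)^V` acts on representations with connected support, and `g` fixes such
a representation exactly when `g` is constant. Burnside's lemma therefore gives
`#classes · (q-1)^|V| = (q-1) · #{x | supp x connected} = (q-1) · Σ_{D connected} (q-1)^|D|`.
Deletion–contraction along the largest non-loop edge, the recursion defining `extact`, proves
`x · Σ_{D connected} x^|D| = x^|V| · Σ_T (x+1)^extact(T)` (this is `T_Q(1, 1+x)` for the Tutte
polynomial); take `x = q - 1`.
-/

section Connectivity

variable {V E : Type} (tl hd : E → V)

def edgeRel (D : Set E) (a b : V) : Prop :=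
  ∃ e ∈ D, (tl e = a ∧ hd e = b) ∨ (tl e = b ∧ hd e = a)

lemma mk_eq_mk_iff_joinedRel {D : Set E} {a b : V} :
    Quot.mk (edgeRel tl hd D) a = Quot.mk _ b ↔ joinedRel tl hd D a b :=
  Quot.eq

lemma mk_tl_eq_mk_hd {D : Set E} {e : E} (he : e ∈ D) :
    Quot.mk (edgeRel tl hd D) (tl e) = Quot.mk _ (hd e) :=
  Quot.sound ⟨e, he, .inl ⟨rfl, rfl⟩⟩

lemma apply_eq_of_joinedRel {α : Type} (f : V → α) {D : Set E}
    (hf : ∀ e ∈ D, f (tl e) = f (hd e)) {a b : V} (h : joinedRel tl hd D a b) : f a = f b := by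
  induction h with
  | rel a b hab =>
    obtain ⟨e, he, ⟨rfl, rfl⟩ | ⟨rfl, rfl⟩⟩ := hab
    exacts [hf e he, (hf e he).symm]
  | refl => rfl
  | symm _ _ _ ih => exact ih.symm
  | trans _ _ _ _ _ ih₁ ih₂ => exact ih₁.trans ih₂

lemma joinedRel_of_union {A C : Set E} (hA : ∀ e ∈ A, joinedRel tl hd C (tl e) (hd e))
    {a b : V} (h : joinedRel tl hd (A ∪ C) a b) : joinedRel tl hd C a b := by
  rw [← mk_eq_mk_iff_joinedRel]
  refine apply_eq_of_joinedRel tl hd _ (fun e he => ?_) h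
  rcases he with he | he
  exacts [(mk_eq_mk_iff_joinedRel tl hd).2 (hA e he), mk_tl_eq_mk_hd tl hd he]

lemma joinedRel_mono {C D : Set E} (h : C ⊆ D) {a b : V} (hab : joinedRel tl hd C a b) :
    joinedRel tl hd D a b :=
  Relation.EqvGen.mono (fun _ _ ⟨e, he, hor⟩ => ⟨e, h he, hor⟩) _ _ hab

lemma isConn_union_iff {A C : Set E} (hA : ∀ e ∈ A, joinedRel tl hd C (tl e) (hd e)) :
    IsConn tl hd (A ∪ C) ↔ IsConn tl hd C :=
  ⟨fun h a b => joinedRel_of_union tl hd hA (h a b),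
    fun h a b => joinedRel_mono tl hd Set.subset_union_right (h a b)⟩

def numComponents (D : Set E) : ℕ := Nat.card (Quot (edgeRel tl hd D))

lemma numComponents_empty : numComponents tl hd ∅ = Nat.card V := by
  refine (Nat.card_eq_of_bijective _ ⟨fun a b hab => ?_, Quot.mk_surjective⟩).symm
  exact apply_eq_of_joinedRel tl hd id (by simp) ((mk_eq_mk_iff_joinedRel tl hd).1 hab)

lemma numComponents_eq_one [Nonempty V] {D : Set E} (h : IsConn tl hd D) :
    numComponents tl hd D = 1 := by
  refine Nat.card_eq_one_iff_unique.2 ⟨⟨fun p p' => ?_⟩, ⟨Quot.mk _ (Classical.arbitrary V)⟩⟩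
  induction p, p' using Quot.induction_on₂ with
  | h a b => exact (mk_eq_mk_iff_joinedRel tl hd).2 (h a b)

lemma numComponents_insert [Finite V] {C : Set E} {e : E}
    (h : ¬ joinedRel tl hd C (tl e) (hd e)) :
    numComponents tl hd (insert e C) + 1 = numComponents tl hd C := by
  set r := edgeRel tl hd C
  set r' := edgeRel tl hd (insert e C)
  have hne : Quot.mk r (tl e) ≠ Quot.mk r (hd e) := mt (mk_eq_mk_iff_joinedRel tl hd).1 h
  -- Merging the class of `hd e` into that of `tl e` realises `Quot r'` inside `Quot r`.
  let merge : V → Quot r := fun v =>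
    if Quot.mk r v = Quot.mk r (hd e) then Quot.mk r (tl e) else Quot.mk r v
  have merge_ne (v : V) : merge v ≠ Quot.mk r (hd e) := by
    unfold merge; split_ifs with hv <;> assumption
  have merge_resp : ∀ u w, r' u w → merge u = merge w := by
    rintro u w ⟨d, hd', hor⟩
    rcases hd' with rfl | hdC
    · rcases hor with ⟨rfl, rfl⟩ | ⟨rfl, rfl⟩ <;> simp [merge]
    · simp only [merge, Quot.sound (show r u w from ⟨d, hdC, hor⟩)]
  have mk_eq_of_mk_eq : ∀ {u w : V}, Quot.mk r u = Quot.mk r w → Quot.mk r' u = Quot.mk r' w :=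
    fun huw => (mk_eq_mk_iff_joinedRel tl hd).2 <|
      joinedRel_mono tl hd (Set.subset_insert e C) ((mk_eq_mk_iff_joinedRel tl hd).1 huw)
  let equiv : {c : Quot r // c ≠ Quot.mk r (hd e)} ≃ Quot r' :=
    { toFun := fun c => Quot.map id (fun u w ⟨d, hd', hor⟩ => ⟨d, Or.inr hd', hor⟩) c.1
      invFun := fun c' => ⟨Quot.lift merge merge_resp c', by
        induction c' using Quot.ind; exact merge_ne _⟩
      left_inv := by
        rintro ⟨⟨v⟩, hv⟩
        exact Subtype.ext (if_neg hv)
      right_inv := by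
        rintro ⟨v⟩
        by_cases hv : Quot.mk r v = Quot.mk r (hd e)
        · simp only [merge, hv, if_true]
          exact (mk_tl_eq_mk_hd tl hd (Set.mem_insert e C)).trans (mk_eq_of_mk_eq hv).symm
        · simp only [merge, hv, if_false]
          rfl }
  rw [numComponents, numComponents, ← Nat.card_congr equiv, ← Finite.card_option,
    Nat.card_congr (Equiv.optionSubtypeNe _)]

end Connectivity

lemma Finset.sum_powerset_insert_filter {α β : Type} [DecidableEq α] [AddCommMonoid β]
    {s : Finset α} {a : α} (ha : a ∉ s) (p : Finset α → Prop) [DecidablePred p]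
    (f : Finset α → β) :
    ∑ t ∈ (insert a s).powerset with p t, f t =
      ∑ t ∈ s.powerset with p t, f t +
        ∑ t ∈ s.powerset with p (insert a t), f (insert a t) := by
  simp only [Finset.sum_filter]
  exact Finset.sum_powerset_insert ha _

lemma Finset.sum_pow_card_powerset {α R : Type} [CommSemiring R] (s : Finset α) (x : R) :
    ∑ t ∈ s.powerset, x ^ t.card = (x + 1) ^ s.card := by
  simpa using Finset.sum_pow_mul_eq_add_pow x 1 s

section ExternalActivity

variable {V E : Type} [LinearOrder E] (tl hd : E → V)

lemma extactAux_insert_of_notMem {T S : Finset E} {e : E} (he : e ∉ S) (C : Finset E) :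
    extactAux tl hd (insert e T) S C = extactAux tl hd T S C := by
  fun_induction extactAux tl hd T S C with
  | case1 S C hne hmem ih =>
    rw [extactAux, dif_pos hne, if_pos (mem_insert_of_mem hmem), ih (by simp [he])]
  | case2 S C hne hmem ih =>
    have hne' : _ ≠ e := ne_of_mem_of_not_mem (mem_of_mem_filter _ (max'_mem _ hne)) he
    rw [extactAux, dif_pos hne, if_neg (by simp [hmem, hne']), ih (by simp [he])]
  | case3 S C hne => rw [extactAux, dif_neg hne]

variable [Nonempty V]

theorem mul_sum_connected_eq_sum_extactAux_of_forall_joinedRel {R : Type} [CommSemiring R]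
    (x : R) {S C : Finset E} (hloops : ∀ f ∈ S, joinedRel tl hd ↑C (tl f) (hd f)) :
    x * ∑ D ∈ S.powerset with IsConn tl hd ↑(D ∪ C), x ^ D.card =
      x ^ numComponents tl hd ↑C * ∑ T ∈ S.powerset with
        IsConn tl hd ↑(T ∪ C) ∧ T.card + 1 = numComponents tl hd ↑C,
        (x + 1) ^ extactAux tl hd T S C := by
  have hne : ¬ (S.filter fun e => ¬ joinedRel tl hd ↑C (tl e) (hd e)).Nonempty :=
    fun ⟨f, hf⟩ => (mem_filter.1 hf).2 (hloops f (mem_filter.1 hf).1)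
  have hconn : ∀ D ∈ S.powerset, IsConn tl hd ↑(D ∪ C) ↔ IsConn tl hd ↑C := fun D hD => by
    rw [coe_union]
    exact isConn_union_iff tl hd fun f hf => hloops f (mem_powerset.1 hD hf)
  have hext : ∀ T, extactAux tl hd T S C = S.card := fun T => by rw [extactAux, dif_neg hne]
  by_cases hC : IsConn tl hd ↑C
  · have hL : S.powerset.filter (fun D => IsConn tl hd ↑(D ∪ C)) = S.powerset :=
      filter_true_of_mem fun D hD => (hconn D hD).2 hC
    have hR :
        S.powerset.filter (fun T => IsConn tl hd ↑(T ∪ C) ∧ T.card + 1 = 1) = {∅} := by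
      ext T
      simp only [mem_filter, mem_singleton, mem_powerset, add_eq_right, card_eq_zero]
      constructor
      · exact fun h => h.2.2
      · rintro rfl
        exact ⟨empty_subset S, by simpa using hC, rfl⟩
    rw [numComponents_eq_one tl hd hC, hL, hR, sum_singleton, hext, sum_pow_card_powerset,
      pow_one]
  · rw [filter_false_of_mem fun D hD => mt (hconn D hD).1 hC,
      filter_false_of_mem fun T hT => mt (fun h => (hconn T hT).1 h.1) hC]
    simp

variable [Finite V]

/-- The edges of `C` are the ones already contracted, so `numComponents tl hd ↑C` is the number
of vertices of the contracted quiver. -/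
theorem mul_sum_connected_eq_sum_extactAux {R : Type} [CommSemiring R] (x : R)
    (S C : Finset E) :
    x * ∑ D ∈ S.powerset with IsConn tl hd ↑(D ∪ C), x ^ D.card =
      x ^ numComponents tl hd ↑C * ∑ T ∈ S.powerset with
        IsConn tl hd ↑(T ∪ C) ∧ T.card + 1 = numComponents tl hd ↑C,
        (x + 1) ^ extactAux tl hd T S C := by
  by_cases hne : (S.filter fun e => ¬ joinedRel tl hd ↑C (tl e) (hd e)).Nonempty
  · set e := (S.filter fun e => ¬ joinedRel tl hd ↑C (tl e) (hd e)).max' hne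
    obtain ⟨heS, he_joined⟩ := mem_filter.1 (max'_mem _ hne)
    have hcomp : numComponents tl hd ↑(insert e C) + 1 = numComponents tl hd ↑C := by
      rw [coe_insert]; exact numComponents_insert tl hd he_joined
    have hext : ∀ T, extactAux tl hd T S C = if e ∈ T
        then extactAux tl hd T (S.erase e) (insert e C) else extactAux tl hd T (S.erase e) C :=
      fun T => by rw [extactAux, dif_pos hne]
    have ih₁ := mul_sum_connected_eq_sum_extactAux x (S.erase e) C
    have ih₂ := mul_sum_connected_eq_sum_extactAux x (S.erase e) (insert e C)
    have hS' : e ∉ S.erase e := notMem_erase e S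
    have hfree : ∀ T ∈ (S.erase e).powerset, e ∉ T :=
      fun T hT heT => hS' (mem_powerset.1 hT heT)
    have hdel : ∑ T ∈ (S.erase e).powerset with
          IsConn tl hd ↑(T ∪ C) ∧ T.card + 1 = numComponents tl hd ↑C,
          (x + 1) ^ extactAux tl hd T S C =
        ∑ T ∈ (S.erase e).powerset with
          IsConn tl hd ↑(T ∪ C) ∧ T.card + 1 = numComponents tl hd ↑C,
          (x + 1) ^ extactAux tl hd T (S.erase e) C :=
      sum_congr rfl fun T hT => by rw [hext, if_neg (hfree T (mem_filter.1 hT).1)]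
    have hcon : ∑ T ∈ (S.erase e).powerset with
          IsConn tl hd ↑(insert e T ∪ C) ∧ (insert e T).card + 1 = numComponents tl hd ↑C,
          (x + 1) ^ extactAux tl hd (insert e T) S C =
        ∑ T ∈ (S.erase e).powerset with
          IsConn tl hd ↑(T ∪ insert e C) ∧ T.card + 1 = numComponents tl hd ↑(insert e C),
          (x + 1) ^ extactAux tl hd T (S.erase e) (insert e C) := by
      rw [sum_filter, sum_filter]
      refine sum_congr rfl fun T hT => ?_
      rw [hext, if_pos (mem_insert_self e T), extactAux_insert_of_notMem tl hd hS',
        card_insert_of_notMem (hfree T hT), insert_union, ← union_insert, ← hcomp]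
      simp only [add_left_inj]
    have hconL : ∑ D ∈ (S.erase e).powerset with IsConn tl hd ↑(insert e D ∪ C),
          x ^ (insert e D).card =
        x * ∑ D ∈ (S.erase e).powerset with IsConn tl hd ↑(D ∪ insert e C), x ^ D.card := by
      rw [mul_sum, sum_filter, sum_filter]
      refine sum_congr rfl fun D hD => ?_
      rw [card_insert_of_notMem (hfree D hD), insert_union, ← union_insert, pow_succ']
    have hS : S.powerset = (insert e (S.erase e)).powerset := by rw [insert_erase heS]
    rw [hS, sum_powerset_insert_filter hS', sum_powerset_insert_filter hS', hdel, hcon,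
      hconL, mul_add, ih₁, mul_left_comm, ih₂, ← hcomp]
    ring
  · exact mul_sum_connected_eq_sum_extactAux_of_forall_joinedRel tl hd x fun f hf =>
      by_contra fun h => hne ⟨f, mem_filter.2 ⟨hf, h⟩⟩
termination_by S.card
decreasing_by all_goals exact card_lt_card (erase_ssubset heS)

end ExternalActivity

section Counting

variable {E k : Type} [Zero k] [Fintype E] [Fintype k]

theorem card_filter_support_eq (D : Finset E) :
    (univ.filter fun x : E → k => univ.filter (x · ≠ 0) = D).card =
      (Fintype.card k - 1) ^ D.card := by
  have hD : (univ.filter fun x : E → k => univ.filter (x · ≠ 0) = D) =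
      Fintype.piFinset fun e => if e ∈ D then univ.erase 0 else {0} := by
    ext x
    simp only [mem_filter, mem_univ, true_and, Fintype.mem_piFinset, Finset.ext_iff]
    refine forall_congr' fun e => ?_
    split_ifs with he <;> simp [he]
  simp only [hD, Fintype.card_piFinset, apply_ite card, card_singleton]
  rw [prod_ite_mem, univ_inter, prod_const, card_erase_of_mem (mem_univ _), card_univ]

theorem card_subtype_support (P : Set E → Prop) :
    Nat.card {x : E → k // P {e | x e ≠ 0}} =
      ∑ D ∈ univ.filter fun D : Finset E => P ↑D, (Fintype.card k - 1) ^ D.card := by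
  have hmaps : ∀ x ∈ univ.filter fun x : E → k => P {e | x e ≠ 0},
      univ.filter (x · ≠ 0) ∈ univ.filter fun D : Finset E => P ↑D := fun x hx => by
    simpa using hx
  rw [Nat.card_eq_fintype_card, Fintype.card_subtype, card_eq_sum_card_fiberwise hmaps]
  refine sum_congr rfl fun D hD => ?_
  rw [← card_filter_support_eq D, filter_filter]
  congr 1
  refine filter_congr fun x _ => ⟨fun h => h.2, fun h => ⟨?_, h⟩⟩
  simpa [← h] using (mem_filter.1 hD).2

end Counting

abbrev IndecToricRep {V E : Type} (tl hd : E → V) (k : Type) [Zero k] : Type :=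
  {x : E → k // IsConn tl hd {e | x e ≠ 0}}

section Gauge

variable {V E k : Type} [Field k] (tl hd : E → V)

def gaugeConj (g : V → kˣ) (x : E → k) (e : E) : k := g (hd e) * x e * (g (tl e) : k)⁻¹

lemma setOf_gaugeConj_ne_zero (g : V → kˣ) (x : E → k) :
    {e | gaugeConj tl hd g x e ≠ 0} = {e | x e ≠ 0} := by
  ext e; simp [gaugeConj]

lemma gaugeConj_one (x : E → k) : gaugeConj tl hd 1 x = x := funext fun e => by simp [gaugeConj]

lemma gaugeConj_mul (g g' : V → kˣ) (x : E → k) :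
    gaugeConj tl hd (g * g') x = gaugeConj tl hd g (gaugeConj tl hd g' x) := funext fun e => by
  simp only [gaugeConj, Pi.mul_apply, Units.val_mul, mul_inv]
  ring

abbrev gaugeAction : MulAction (V → kˣ) (IndecToricRep tl hd k) where
  smul g x := ⟨gaugeConj tl hd g x.1, by rw [setOf_gaugeConj_ne_zero]; exact x.2⟩
  one_smul x := Subtype.ext (gaugeConj_one tl hd x.1)
  mul_smul g g' x := Subtype.ext (gaugeConj_mul tl hd g g' x.1)

attribute [local instance] gaugeAction

lemma isoRep_iff_orbitRel (x y : IndecToricRep tl hd k) :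
    IsoRep tl hd x.1 y.1 ↔ MulAction.orbitRel (V → kˣ) _ x y := by
  rw [MulAction.orbitRel_apply, MulAction.mem_orbit_symm]
  exact ⟨fun ⟨g, hg⟩ => ⟨g, Subtype.ext (funext hg).symm⟩,
    fun ⟨g, hg⟩ => ⟨g, fun e => (congrFun (congrArg Subtype.val hg) e).symm⟩⟩

lemma gauge_smul_eq_self_iff (g : V → kˣ) (x : IndecToricRep tl hd k) :
    g • x = x ↔ ∀ a b, g a = g b := by
  rw [Subtype.ext_iff]
  change gaugeConj tl hd g x.1 = x.1 ↔ _
  rw [funext_iff]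
  constructor
  · intro h a b
    refine apply_eq_of_joinedRel tl hd g (fun e he => ?_) (x.2 a b)
    have hfix := h e
    rw [gaugeConj, mul_inv_eq_iff_eq_mul₀ (Units.ne_zero _), mul_comm (x.1 e)] at hfix
    exact Units.ext (mul_right_cancel₀ he hfix).symm
  · intro h e
    rw [gaugeConj, h (hd e) (tl e)]
    field_simp

theorem card_isoClasses_mul [Fintype V] [Nonempty V] [Fintype E] [Fintype k] :
    Nat.card (Quot fun x y : IndecToricRep tl hd k => IsoRep tl hd x.1 y.1) *
      Fintype.card kˣ ^ Fintype.card V =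
    Fintype.card kˣ * Nat.card (IndecToricRep tl hd k) := by
  have hfix (g : V → kˣ) : Fintype.card (MulAction.fixedBy (IndecToricRep tl hd k) g) =
      if ∀ a b, g a = g b then Nat.card (IndecToricRep tl hd k) else 0 := by
    rw [Fintype.card_eq_nat_card]
    split_ifs with hg
    · exact Nat.card_congr <|
        Equiv.subtypeUnivEquiv fun x => (gauge_smul_eq_self_iff tl hd g x).2 hg
    · exact @Nat.card_of_isEmpty _ ⟨fun x => hg ((gauge_smul_eq_self_iff tl hd g x).1 x.2)⟩
  have hconst : (univ.filter fun g : V → kˣ => ∀ a b, g a = g b).card = Fintype.card kˣ := by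
    rw [← Fintype.card_subtype]
    exact Fintype.card_congr
      { toFun := fun g => g.1 (Classical.arbitrary V)
        invFun := fun c => ⟨fun _ => c, fun _ _ => rfl⟩
        left_inv := fun g => Subtype.ext (funext fun a => g.2 _ a)
        right_inv := fun _ => rfl }
  have horbits : (Quot fun x y : IndecToricRep tl hd k => IsoRep tl hd x.1 y.1) ≃
      MulAction.orbitRel.Quotient (V → kˣ) _ :=
    Quot.congrRight (isoRep_iff_orbitRel tl hd)
  rw [Nat.card_congr horbits, Nat.card_eq_fintype_card,
    ← Fintype.card_fun, ← MulAction.sum_card_fixedBy_eq_card_orbits_mul_card_group]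
  simp only [hfix, sum_ite, sum_const_zero, sum_const, smul_eq_mul, hconst, add_zero]

end Gauge

theorem mul_sum_connected_eq_pow_mul_sum_spanningTree {V E R : Type} [Fintype V] [Nonempty V]
    [Fintype E] [LinearOrder E] [CommSemiring R] (tl hd : E → V) (x : R) :
    x * ∑ D ∈ univ.filter fun D : Finset E => IsConn tl hd ↑D, x ^ D.card =
      x ^ Fintype.card V * ∑ T ∈ univ.filter fun T : Finset E => IsSpanningTree tl hd T,
        (x + 1) ^ extact tl hd T := by
  have h := mul_sum_connected_eq_sum_extactAux tl hd x univ ∅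
  simp only [powerset_univ, union_empty, coe_empty, numComponents_empty,
    Nat.card_eq_fintype_card] at h
  convert h using 4 <;> rfl

theorem statement2_general {V E : Type} [Fintype V] [Nonempty V] [Fintype E] [LinearOrder E]
    (tl hd : E → V) (q : ℕ) (k : Type) [Field k] [Fintype k] (hk : Fintype.card k = q) :
    Nat.card (Quot fun x y : {x : E → k // IsConn tl hd {e | x e ≠ 0}} =>
        IsoRep tl hd x.1 y.1)
      = ∑ T ∈ Finset.univ.filter fun T : Finset E => IsSpanningTree tl hd T,
          q ^ extact tl hd T := by
  have hq : Fintype.card k - 1 + 1 = q := by rw [← hk, Nat.sub_add_cancel Fintype.card_pos]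
  have hpos : 0 < (Fintype.card k - 1) ^ Fintype.card V := by
    rw [← Fintype.card_units]; exact pow_pos Fintype.card_pos _
  refine Nat.eq_of_mul_eq_mul_right hpos ?_
  rw [← Fintype.card_units, card_isoClasses_mul, Fintype.card_units, card_subtype_support,
    mul_sum_connected_eq_pow_mul_sum_spanningTree, hq, mul_comm]

/-- the number of isomorphism classes of indecomposable toric
representations of a connected quiver over a finite field with `q` elements equals
`Σ_{spanning trees T} q ^ extact(Q, T)`. -/
theorem statement2 {V E : Type} [Fintype V] [Nonempty V] [Fintype E] [LinearOrder E]
    (tl hd : E → V) (hQ : IsConn tl hd Set.univ)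
    (q : ℕ) (k : Type) [Field k] [Fintype k] (hk : Fintype.card k = q) :
    Nat.card (Quot fun x y : {x : E → k // IsConn tl hd {e | x e ≠ 0}} =>
        IsoRep tl hd x.1 y.1)
      = ∑ T ∈ Finset.univ.filter fun T : Finset E => IsSpanningTree tl hd T,
          q ^ extact tl hd T :=
  statement2_general tl hd q k hk

end
end

section
/- Let Q be a connected quiver, k a field, λ : V → k with Σ_{i∈V} λ_i = 0, and (x, x*) a toric representation of the double quiver of Q. Let e₀ be a non-loop edge with x_{e₀} ≠ 0 or x*_{e₀} ≠ 0. If (x, x*) satisfies the moment map equations for λ on Q, then the restriction of (x, x*) to E ∖ {e₀} satisfies the moment map equations for λ/e₀ on the contracted quiver Q/e₀. -/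
open Classical Finset

noncomputable section

/-! Contracting `e₀` amounts to pushing the quiver forward along the quotient map
`π : V → V/e₀` and then deleting `e₀`, which has become a loop. A pushforward adds up the
net flows over each fibre of `π`, the fibre of the new vertex being `{t e₀, h e₀}`, and a loop
contributes nothing to any net flow. -/

def netFlow {V E k : Type} [Fintype E] [AddCommGroup k] (tl hd : E → V) (c : E → k)
    (i : V) : k :=
  ∑ e ∈ univ.filter fun e => hd e = i, c e - ∑ e ∈ univ.filter fun e => tl e = i, c e

theorem momentMap_iff_netFlow {V E k : Type} [Fintype E] [Field k] (tl hd : E → V)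
    (lam : V → k) (x xs : E → k) :
    MomentMap tl hd lam x xs ↔ ∀ i, netFlow tl hd (fun e => x e * xs e) i = lam i :=
  Iff.rfl

section netFlow

variable {V W E k : Type} [Fintype E] [AddCommGroup k]

theorem netFlow_eq_sum (tl hd : E → V) (c : E → k) (i : V) :
    netFlow tl hd c i =
      ∑ e, ((if hd e = i then c e else 0) - if tl e = i then c e else 0) := by
  simp only [netFlow, sum_filter, sum_sub_distrib]

theorem netFlow_comp [Fintype V] [DecidableEq W] (π : V → W) (tl hd : E → V) (c : E → k)
    (w : W) :
    netFlow (π ∘ tl) (π ∘ hd) c w =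
      ∑ i ∈ univ.filter fun i => π i = w, netFlow tl hd c i := by
  simp only [netFlow, sum_sub_distrib, sum_fiberwise_eq_sum_filter univ _ hd,
    sum_fiberwise_eq_sum_filter univ _ tl, mem_filter, mem_univ, true_and, Function.comp_apply]

theorem netFlow_subtype_ne_of_loop [DecidableEq E] (tl hd : E → V) (c : E → k) {e₀ : E}
    (h : tl e₀ = hd e₀) (i : V) :
    netFlow (fun f : {f // f ≠ e₀} => tl f) (fun f => hd f) (fun f => c f) i =
      netFlow tl hd c i := by
  rw [netFlow_eq_sum, netFlow_eq_sum tl hd, Fintype.sum_eq_add_sum_subtype_ne _ e₀, h,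
    sub_self, zero_add]

end netFlow

theorem sum_filter_cProj_eq_contractParam {V R : Type} [Fintype V] [DecidableEq V] [AddCommMonoid R]
    {a b : V} (h : b ≠ a) (θ : V → R) (j : {i : V // i ≠ a}) :
    ∑ i ∈ univ.filter fun i => cProj a b h i = j, θ i = contractParam a b θ j := by
  have hcProj : ∀ i, cProj a b h i = j ↔ i = a ∧ (j : V) = b ∨ i = j := by
    intro i
    by_cases hi : i = a
    · simp [cProj, hi, Subtype.ext_iff, eq_comm, j.2.symm]
    · simp [cProj, hi, Subtype.ext_iff]
  unfold contractParam
  split_ifs with hj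
  · have hfibre : univ.filter (fun i => cProj a b h i = j) = {a, b} := by
      ext i; simp [hcProj, hj]
    rw [hfibre, sum_pair h.symm]
  · have hfibre : univ.filter (fun i => cProj a b h i = j) = {(j : V)} := by
      ext i; simp [hcProj, hj]
    rw [hfibre, sum_singleton]

theorem statement5_general {V E : Type} [Fintype V] [Fintype E]
    [DecidableEq V] [DecidableEq E]
    (tl hd : E → V)
    (k : Type) [Field k] (lam : V → k)
    (x xs : E → k) (e₀ : E) (hloop : hd e₀ ≠ tl e₀)
    (hmm : MomentMap tl hd lam x xs) :
    MomentMap (contractTl tl hd e₀ hloop) (contractHd tl hd e₀ hloop)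
      (contractParam (tl e₀) (hd e₀) lam)
      (fun f => x f.1) (fun f => xs f.1) := by
  rw [momentMap_iff_netFlow] at hmm ⊢
  intro j
  set π := cProj (tl e₀) (hd e₀) hloop
  have hπ : π (tl e₀) = π (hd e₀) := by simp [π, cProj, hloop]
  calc netFlow (contractTl tl hd e₀ hloop) (contractHd tl hd e₀ hloop)
        (fun f => x f * xs f) j
      = netFlow (π ∘ tl) (π ∘ hd) (fun e => x e * xs e) j :=
        netFlow_subtype_ne_of_loop (π ∘ tl) (π ∘ hd) (fun e => x e * xs e) hπ j
    _ = ∑ i ∈ univ.filter fun i => π i = j, lam i := by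
        rw [netFlow_comp]
        exact sum_congr rfl fun i _ => hmm i
    _ = contractParam (tl e₀) (hd e₀) lam j := sum_filter_cProj_eq_contractParam hloop lam j

/-- the moment map equations are preserved by contraction of a non-loop
edge `e₀` with `x e₀ ≠ 0` or `xs e₀ ≠ 0`. -/
theorem statement5 {V E : Type} [Fintype V] [Nonempty V] [Fintype E]
    [DecidableEq V] [DecidableEq E]
    (tl hd : E → V) (hQ : IsConn tl hd Set.univ)
    (k : Type) [Field k] (lam : V → k) (hlam : ∑ i, lam i = 0)
    (x xs : E → k) (e₀ : E) (hloop : hd e₀ ≠ tl e₀)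
    (hnz : x e₀ ≠ 0 ∨ xs e₀ ≠ 0)
    (hmm : MomentMap tl hd lam x xs) :
    MomentMap (contractTl tl hd e₀ hloop) (contractHd tl hd e₀ hloop)
      (contractParam (tl e₀) (hd e₀) lam)
      (fun f => x f.1) (fun f => xs f.1) :=
  statement5_general tl hd k lam x xs e₀ hloop hmm

end
end

section
/- Let Q be a connected quiver, k a field, θ : V → ℝ with Σ_{i∈V} θ_i = 0, and (x, x*) a toric representation of the double quiver of Q. Let e₀ be a non-loop edge with x_{e₀} ≠ 0 or x*_{e₀} ≠ 0. If (x, x*) is θ-stable on Q, then the restriction of (x, x*) to E ∖ {e₀} is θ/e₀-stable on the contracted quiver Q/e₀. -/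
open Classical Finset

noncomputable section

/- The preimage `π⁻¹(J)` of a subset `J` of the vertices of `Q/e` under the quotient map
`π : V → V/e` is closed for `(x, xs)` whenever `J` is closed for the restriction, since
both ends of `e` lie in `π⁻¹(J)` or neither does; it is proper and nonempty when `J` is,
and its `θ`-weight is the `θ/e`-weight of `J` because each fibre of `π` sums to the value
of `θ/e` at its image. -/

theorem StableSub.of_surjective_pullback {V V' E E' k : Type} [Fintype V] [Fintype V']
    [DecidableEq V'] [Zero k] {tl hd : E → V} {tl' hd' : E' → V'} {θ : V → ℝ} {θ' : V' → ℝ}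
    {x xs : E → k} {x' xs' : E' → k} (π : V → V') (hπ : Function.Surjective π)
    (hθ : ∀ j, ∑ i with π i = j, θ i = θ' j)
    (hclosed : ∀ J, ClosedOn tl' hd' x' xs' Set.univ J →
      ClosedOn tl hd x xs Set.univ {i | π i ∈ J})
    (hstab : StableSub tl hd θ x xs univ Set.univ) :
    StableSub tl' hd' θ' x' xs' univ Set.univ := by
  intro J _ hJ hJne hJU
  have hne : ({i | π i ∈ J} : Finset V).Nonempty := by
    obtain ⟨j, hj⟩ := hJne
    obtain ⟨i, rfl⟩ := hπ j
    exact ⟨i, by simpa using hj⟩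
  have hU : ({i | π i ∈ J} : Finset V) ≠ univ := by
    refine fun h => hJU (eq_univ_of_forall fun j => ?_)
    obtain ⟨i, rfl⟩ := hπ j
    have hi : i ∈ ({i | π i ∈ J} : Finset V) := by rw [h]; exact mem_univ i
    simpa using hi
  calc 0 < ∑ i with π i ∈ J, θ i := hstab _ (subset_univ _) (hclosed J hJ) hne hU
    _ = ∑ j ∈ J, θ' j := by
      rw [← sum_fiberwise_eq_sum_filter]
      exact sum_congr rfl fun j _ => hθ j

section Contraction

variable {V : Type} {a b : V} (h : b ≠ a)

theorem cProj_eq_iff (i : V) (j : {j : V // j ≠ a}) :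
    cProj a b h i = j ↔ i = j ∨ i = a ∧ (j : V) = b := by
  unfold cProj
  split_ifs with hi
  · subst hi
    simp [Subtype.ext_iff, eq_comm, j.2.symm]
  · simp [Subtype.ext_iff, hi]

theorem cProj_val (j : {j : V // j ≠ a}) : cProj a b h j = j :=
  (cProj_eq_iff h _ _).2 (Or.inl rfl)

theorem sum_fiber_cProj [Fintype V] [DecidableEq V] {R : Type} [AddCommMonoid R] (θ : V → R)
    (j : {j : V // j ≠ a}) :
    ∑ i with cProj a b h i = j, θ i = contractParam a b θ j := by
  unfold contractParam
  split_ifs with hj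
  · have hfiber : ({i | cProj a b h i = j} : Finset V) = {a, b} := by
      ext i
      simp [cProj_eq_iff, hj, or_comm]
    rw [hfiber, sum_pair h.symm]
  · have hfiber : ({i | cProj a b h i = j} : Finset V) = {(j : V)} := by
      ext i
      simp [cProj_eq_iff, hj]
    rw [hfiber, sum_singleton]

end Contraction

theorem ClosedOn.preimage_cProj {V E k : Type} [Fintype V] [DecidableEq V] [Zero k]
    {tl hd : E → V} {e : E} (h : hd e ≠ tl e) {x xs : E → k} {J : Finset {j : V // j ≠ tl e}}
    (hJ : ClosedOn (contractTl tl hd e h) (contractHd tl hd e h)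
      (fun f => x f.1) (fun f => xs f.1) Set.univ J) :
    ClosedOn tl hd x xs Set.univ {i | cProj (tl e) (hd e) h i ∈ J} := by
  intro f _
  rcases eq_or_ne f e with rfl | hf
  · have hends : cProj (tl f) (hd f) h (tl f) = cProj (tl f) (hd f) h (hd f) :=
      ((cProj_eq_iff h _ _).2 (Or.inr ⟨rfl, rfl⟩)).trans (cProj_val h ⟨hd f, h⟩).symm
    simp [hends]
  · simpa [contractTl, contractHd] using hJ ⟨f, hf⟩ (Set.mem_univ _)

theorem statement6_general {V E : Type} [Fintype V]
    [DecidableEq V]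
    (tl hd : E → V)
    (k : Type) [Field k] (θ : V → ℝ)
    (x xs : E → k) (e₀ : E) (hloop : hd e₀ ≠ tl e₀)
    (hstab : StableSub tl hd θ x xs Finset.univ Set.univ) :
    StableSub (contractTl tl hd e₀ hloop) (contractHd tl hd e₀ hloop)
      (contractParam (tl e₀) (hd e₀) θ)
      (fun f => x f.1) (fun f => xs f.1) Finset.univ Set.univ :=
  hstab.of_surjective_pullback (cProj (tl e₀) (hd e₀) hloop)
    (fun j => ⟨j, cProj_val hloop j⟩) (sum_fiber_cProj hloop θ)
    (fun _ hJ => hJ.preimage_cProj hloop)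

/-- `θ`-stability is preserved by contraction of a non-loop edge `e₀` with
`x e₀ ≠ 0` or `xs e₀ ≠ 0`. -/
theorem statement6 {V E : Type} [Fintype V] [Nonempty V] [Fintype E]
    [DecidableEq V] [DecidableEq E]
    (tl hd : E → V) (hQ : IsConn tl hd Set.univ)
    (k : Type) [Field k] (θ : V → ℝ) (hθ : ∑ i, θ i = 0)
    (x xs : E → k) (e₀ : E) (hloop : hd e₀ ≠ tl e₀)
    (hnz : x e₀ ≠ 0 ∨ xs e₀ ≠ 0)
    (hstab : StableSub tl hd θ x xs Finset.univ Set.univ) :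
    StableSub (contractTl tl hd e₀ hloop) (contractHd tl hd e₀ hloop)
      (contractParam (tl e₀) (hd e₀) θ)
      (fun f => x f.1) (fun f => xs f.1) Finset.univ Set.univ :=
  statement6_general tl hd k θ x xs e₀ hloop hstab

end
end

section
/- Let Q be a connected quiver, θ : V → ℝ with Σ_{i∈V} θ_i = 0, and T a spanning tree of Q. For e ∈ T set w_e := Σ_{j ∈ T_{h(e)}} θ_j. Then for every vertex i ∈ V: Σ_{e ∈ T, h(e) = i} w_e − Σ_{e ∈ T, t(e) = i} w_e = θ_i. -/
open Classical Finset

noncomputable section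

/-!
Deleting an edge `e` of a spanning tree leaves exactly two classes, `T_{t(e)}` and `T_{h(e)}`
(the lower bound `#V ≤ #D + 1` for connected graphs makes every tree edge a bridge). Since
`Σ θ = 0`, the weight `w_e` is therefore `∓ Σ θ` over the side of `e` away from its endpoint `i`,
with sign `-` if `h(e) = i` and `+` if `t(e) = i`. The far sides of the tree edges at `i`
partition `V ∖ {i}`, so the left-hand side is `-Σ_{j ≠ i} θ_j = θ_i`.
-/

section SpanningTree

variable {V E : Type} {tl hd : E → V}

lemma joinedRel_equivalence (D : Set E) : Equivalence (joinedRel tl hd D) :=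
  Relation.EqvGen.is_equivalence _

lemma joinedRel_of_adj {D : Set E} {e : E} (he : e ∈ D) {x y : V}
    (hxy : tl e = x ∧ hd e = y ∨ tl e = y ∧ hd e = x) : joinedRel tl hd D x y :=
  Relation.EqvGen.rel _ _ ⟨e, he, hxy⟩

lemma joinedRel_of_incident {D : Set E} {e : E} (he : e ∈ D) {x y : V}
    (hx : hd e = x ∨ tl e = x) (hy : hd e = y ∨ tl e = y) : joinedRel tl hd D x y := by
  have hD := joinedRel_equivalence (tl := tl) (hd := hd) D
  rcases hx with rfl | rfl <;> rcases hy with rfl | rfl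
  · exact hD.refl _
  · exact joinedRel_of_adj he (Or.inr ⟨rfl, rfl⟩)
  · exact joinedRel_of_adj he (Or.inl ⟨rfl, rfl⟩)
  · exact hD.refl _

@[elab_as_elim]
lemma joinedRel.induction {D : Set E} {p : V → Prop}
    (hp : ∀ e ∈ D, ∀ x y, tl e = x ∧ hd e = y ∨ tl e = y ∧ hd e = x → p x → p y)
    {a b : V} (hab : joinedRel tl hd D a b) (ha : p a) : p b := by
  have key : p a ↔ p b := by
    clear ha
    induction hab with
    | rel x y hxy =>
      obtain ⟨e, he, h⟩ := hxy
      exact ⟨hp e he x y h, hp e he y x h.symm⟩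
    | refl => rfl
    | symm _ _ _ ih => exact ih.symm
    | trans _ _ _ _ _ ih₁ ih₂ => exact ih₁.trans ih₂
  exact key.mp ha

lemma joinedRel_erase_or {D : Finset E} {e : E} (he : e ∈ D) {j : V}
    (h : joinedRel tl hd ↑D (tl e) j) :
    joinedRel tl hd ↑(D.erase e) (tl e) j ∨ joinedRel tl hd ↑(D.erase e) (hd e) j := by
  have hD := joinedRel_equivalence (tl := tl) (hd := hd) ↑(D.erase e)
  refine joinedRel.induction (fun g hg x y hxy hx => ?_) h (Or.inl (hD.refl _))
  by_cases hge : g = e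
  · subst hge
    rcases hxy with ⟨-, rfl⟩ | ⟨rfl, -⟩
    · exact Or.inr (hD.refl _)
    · exact Or.inl (hD.refl _)
  · have hgy : joinedRel tl hd ↑(D.erase e) x y :=
      joinedRel_of_adj (Finset.mem_erase.2 ⟨hge, hg⟩) hxy
    exact hx.imp (hD.trans · hgy) (hD.trans · hgy)

lemma joinedRel_erase_or_joinedRel_erase {D : Finset E} {e f : E} (he : e ∈ D) (hf : f ∈ D)
    (hef : e ≠ f) {i j : V} (hei : hd e = i ∨ tl e = i) (hfi : hd f = i ∨ tl f = i)
    (hij : joinedRel tl hd ↑D i j) :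
    joinedRel tl hd ↑(D.erase e) i j ∨ joinedRel tl hd ↑(D.erase f) i j := by
  have hDe := joinedRel_equivalence (tl := tl) (hd := hd) ↑(D.erase e)
  have hDf := joinedRel_equivalence (tl := tl) (hd := hd) ↑(D.erase f)
  refine joinedRel.induction (fun g hg x y hxy hx => ?_) hij (Or.inl (hDe.refl _))
  have hgy : hd g = y ∨ tl g = y := hxy.elim (fun h => Or.inl h.2) (fun h => Or.inr h.1)
  by_cases hge : g = e
  · subst hge
    exact Or.inr (joinedRel_of_incident (Finset.mem_erase.2 ⟨hef, hg⟩) hei hgy)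
  by_cases hgf : g = f
  · subst hgf
    exact Or.inl (joinedRel_of_incident (Finset.mem_erase.2 ⟨Ne.symm hef, hg⟩) hfi hgy)
  exact hx.imp (hDe.trans · (joinedRel_of_adj (Finset.mem_erase.2 ⟨hge, hg⟩) hxy))
    (hDf.trans · (joinedRel_of_adj (Finset.mem_erase.2 ⟨hgf, hg⟩) hxy))

/-- Counted through the simple graph with an edge `{tl e, hd e}` for every non-loop `e ∈ D`. -/
lemma card_le_card_add_one_of_isConn [Fintype V] {D : Finset E} (hD : IsConn tl hd ↑D) :
    Fintype.card V ≤ D.card + 1 := by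
  rcases isEmpty_or_nonempty V with _ | _
  · simp
  set G := SimpleGraph.fromEdgeSet ((fun e => s(tl e, hd e)) '' (D : Set E))
  have hG : G.Connected := by
    refine (SimpleGraph.connected_iff_exists_forall_reachable G).2
      ⟨Classical.arbitrary V, fun b => ?_⟩
    refine joinedRel.induction (fun g hg x y hxy hx => hx.trans ?_) (hD _ b) .rfl
    by_cases hxy' : x = y
    · exact hxy' ▸ .rfl
    refine SimpleGraph.Adj.reachable ((SimpleGraph.fromEdgeSet_adj _).2 ⟨⟨g, hg, ?_⟩, hxy'⟩)
    rcases hxy with ⟨rfl, rfl⟩ | ⟨rfl, rfl⟩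
    · rfl
    · exact Sym2.eq_swap
  have hedges : Nat.card G.edgeSet ≤ D.card := by
    rw [Nat.card_coe_set_eq, SimpleGraph.edgeSet_fromEdgeSet]
    calc _ ≤ ((fun e => s(tl e, hd e)) '' (D : Set E)).ncard :=
          Set.ncard_le_ncard Set.sdiff_subset (Set.toFinite _)
      _ ≤ D.card := by simpa using Set.ncard_image_le (f := fun e => s(tl e, hd e)) D.finite_toSet
  have := hG.card_vert_le_card_edgeSet_add_one
  rw [Nat.card_eq_fintype_card] at this
  omega

namespace IsSpanningTree

variable [Fintype V] {T : Finset E}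

lemma not_joinedRel_erase (hT : IsSpanningTree tl hd T) {e : E} (he : e ∈ T) {x y : V}
    (hxy : tl e = x ∧ hd e = y ∨ tl e = y ∧ hd e = x) :
    ¬ joinedRel tl hd ↑(T.erase e) x y := by
  have hR := joinedRel_equivalence (tl := tl) (hd := hd) ↑(T.erase e)
  intro hjoin
  have hte : joinedRel tl hd ↑(T.erase e) (tl e) (hd e) := by
    rcases hxy with ⟨rfl, rfl⟩ | ⟨rfl, rfl⟩
    exacts [hjoin, hR.symm hjoin]
  have htl : ∀ a, joinedRel tl hd ↑(T.erase e) (tl e) a := fun a =>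
    (joinedRel_erase_or he (hT.1 _ a)).elim id (hR.trans hte)
  have hle := card_le_card_add_one_of_isConn (D := T.erase e)
    fun a b => hR.trans (hR.symm (htl a)) (htl b)
  have := hT.2
  rw [Finset.card_erase_add_one he] at hle
  omega

lemma tl_ne_hd (hT : IsSpanningTree tl hd T) {e : E} (he : e ∈ T) : tl e ≠ hd e := fun h =>
  hT.not_joinedRel_erase he (Or.inl ⟨rfl, rfl⟩) (h ▸ (joinedRel_equivalence _).refl _)

lemma component_hd_eq_compl (hT : IsSpanningTree tl hd T) {e : E} (he : e ∈ T) :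
    component tl hd (T.erase e) (hd e) = (component tl hd (T.erase e) (tl e))ᶜ := by
  have hR := joinedRel_equivalence (tl := tl) (hd := hd) ↑(T.erase e)
  ext j
  simp only [component, Finset.mem_compl, Finset.mem_filter, Finset.mem_univ, true_and]
  exact ⟨fun hj htj => hT.not_joinedRel_erase he (Or.inl ⟨rfl, rfl⟩) (hR.trans htj (hR.symm hj)),
    (joinedRel_erase_or he (hT.1 _ j)).resolve_left⟩

lemma exists_not_joinedRel_erase (hT : IsSpanningTree tl hd T) {i j : V} (hij : i ≠ j) :
    ∃ e ∈ T, (hd e = i ∨ tl e = i) ∧ ¬ joinedRel tl hd ↑(T.erase e) i j := by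
  suffices j = i ∨ ∃ e ∈ T, (hd e = i ∨ tl e = i) ∧ ¬ joinedRel tl hd ↑(T.erase e) i j from
    this.resolve_left hij.symm
  refine joinedRel.induction (fun g hg x y hxy hx => ?_) (hT.1 i j) (Or.inl rfl)
  by_cases hyi : y = i
  · exact Or.inl hyi
  right
  rcases hx with rfl | ⟨e, he, hei, hsep⟩
  · exact ⟨g, hg, hxy.elim (fun h => Or.inr h.1) (fun h => Or.inl h.2),
      hT.not_joinedRel_erase hg hxy⟩
  by_cases hge : g = e
  · subst hge
    have hxi : x ≠ i := fun h => hsep (h ▸ (joinedRel_equivalence _).refl _)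
    rcases hxy with ⟨rfl, rfl⟩ | ⟨rfl, rfl⟩ <;> rcases hei with h | h
    exacts [(hyi h).elim, (hxi h).elim, (hxi h).elim, (hyi h).elim]
  · have hR := joinedRel_equivalence (tl := tl) (hd := hd) ↑(T.erase e)
    exact ⟨e, he, hei, fun hiy => hsep (hR.trans hiy
      (hR.symm (joinedRel_of_adj (Finset.mem_erase.2 ⟨hge, hg⟩) hxy)))⟩

lemma sum_sum_compl_component {M : Type} [AddCommMonoid M] (hT : IsSpanningTree tl hd T)
    (i : V) (f : V → M) :
    ∑ e ∈ T.filter (fun e => hd e = i ∨ tl e = i),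
        ∑ j ∈ (component tl hd (T.erase e) i)ᶜ, f j = ∑ j ∈ Finset.univ.erase i, f j := by
  rw [← Finset.sum_biUnion]
  · congr 1
    ext j
    simp only [component, Finset.mem_biUnion, Finset.mem_filter, Finset.mem_compl,
      Finset.mem_univ, true_and, Finset.mem_erase, and_true]
    refine ⟨fun ⟨e, ⟨_, _⟩, hsep⟩ hji => hsep (hji ▸ (joinedRel_equivalence _).refl _),
      fun hji => ?_⟩
    obtain ⟨e, he, hei, hsep⟩ := hT.exists_not_joinedRel_erase (Ne.symm hji)
    exact ⟨e, ⟨he, hei⟩, hsep⟩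
  · intro e he f hf hef
    simp only [Finset.coe_filter, Set.mem_ofPred_eq] at he hf
    refine Finset.disjoint_left.2 fun j hje hjf => ?_
    simp only [component, Finset.mem_compl, Finset.mem_filter, Finset.mem_univ,
      true_and] at hje hjf
    exact (joinedRel_erase_or_joinedRel_erase he.1 hf.1 hef he.2 hf.2 (hT.1 i j)).elim hje hjf

end IsSpanningTree

end SpanningTree

theorem statement8_general {V E : Type} [Fintype V]
    (tl hd : E → V)
    (θ : V → ℝ) (hθ : ∑ i, θ i = 0)
    (T : Finset E) (hT : IsSpanningTree tl hd T) :
    ∀ i : V,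
      (∑ e ∈ T.filter fun e => hd e = i,
          ∑ j ∈ component tl hd (T.erase e) (hd e), θ j) -
        (∑ e ∈ T.filter fun e => tl e = i,
          ∑ j ∈ component tl hd (T.erase e) (hd e), θ j) = θ i := by
  intro i
  have hhd : ∀ e ∈ T.filter fun e => hd e = i, ∑ j ∈ component tl hd (T.erase e) (hd e), θ j
      = -∑ j ∈ (component tl hd (T.erase e) i)ᶜ, θ j := by
    intro e he
    rw [(Finset.mem_filter.1 he).2]
    linarith [Finset.sum_compl_add_sum (component tl hd (T.erase e) i) θ]
  have htl : ∀ e ∈ T.filter fun e => tl e = i, ∑ j ∈ component tl hd (T.erase e) (hd e), θ j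
      = ∑ j ∈ (component tl hd (T.erase e) i)ᶜ, θ j := by
    intro e he
    rw [hT.component_hd_eq_compl (Finset.mem_filter.1 he).1, (Finset.mem_filter.1 he).2]
  have hsplit : T.filter (fun e => hd e = i ∨ tl e = i)
      = T.filter (fun e => hd e = i) ∪ T.filter (fun e => tl e = i) := Finset.filter_or ..
  have hdisj : Disjoint (T.filter fun e => hd e = i) (T.filter fun e => tl e = i) :=
    Finset.disjoint_filter.2 fun e he h h' => hT.tl_ne_hd he (h'.trans h.symm)
  rw [Finset.sum_congr rfl hhd, Finset.sum_congr rfl htl, Finset.sum_neg_distrib]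
  have hsum := hT.sum_sum_compl_component i θ
  rw [hsplit, Finset.sum_union hdisj] at hsum
  linarith [Finset.add_sum_erase Finset.univ θ (Finset.mem_univ i)]

/-- for a spanning tree `T` and the weights `w e = Σ_{j ∈ T_{h(e)}} θ j`,
one has `Σ_{e ∈ T, h(e) = i} w e − Σ_{e ∈ T, t(e) = i} w e = θ i` at every vertex `i`. -/
theorem statement8 {V E : Type} [Fintype V] [Nonempty V] [Fintype E]
    (tl hd : E → V) (hQ : IsConn tl hd Set.univ)
    (θ : V → ℝ) (hθ : ∑ i, θ i = 0)
    (T : Finset E) (hT : IsSpanningTree tl hd T) :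
    ∀ i : V,
      (∑ e ∈ T.filter fun e => hd e = i,
          ∑ j ∈ component tl hd (T.erase e) (hd e), θ j) -
        (∑ e ∈ T.filter fun e => tl e = i,
          ∑ j ∈ component tl hd (T.erase e) (hd e), θ j) = θ i :=
  statement8_general tl hd θ hθ T hT
end
end
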